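/- arXiv:2003.03341 — 5 statements merged into one kernel-verified Lean document; each statement's English description precedes it below -/
import Mathlib

section
/- Let Θ be a measurable space, K ≥ 1, and let μ_pr^K be the K-fold product of a probability measure μ_pr on Θ (so μ_pr^K is invariant under coordinate permutations). Let π : Θ^K → [0,∞) be measurable with ∫ π dμ_pr^K = 1 and let μ be the probability measure on Θ^K with density π with respect to μ_pr^K. Let S_K be a nonempty finite set of permutations of {1,…,K} closed under inversion, and let r : Θ^K × S_K → [0,1] be a swapping ratio, i.e. r(·,σ) is measurable for each σ ∈ S_K and Σ_{σ∈S_K} r(θ,σ) = 1 for every θ ∈ Θ^K. Define the swapping acceptance probability α_swap(θ,σ) := min{1, π(θ_σ) r(θ_σ, σ⁻¹) / (π(θ) r(θ,σ))} when π(θ) r(θ,σ) > 0 and α_swap(θ,σ) := 0 otherwise, and define the swapping kernel q(θ, B) := Σ_{σ∈S_K} r(θ,σ) [ (1 − α_swap(θ,σ)) δ_θ(B) + α_swap(θ,σ) δ_{θ_σ}(B) ]. Then q is a Markov kernel on Θ^K that is reversible with respect to μ: for all measurable sets A, B ⊆ Θ^K, ∫_A q(θ, B) μ(dθ) = ∫_B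 q(θ, A) μ(dθ). -/
open MeasureTheory ProbabilityTheory ENNReal

/-!
Each move `θ ↦ θ_σ` preserves the product prior `μ_pr^K`, and the Metropolis–Hastings choice of
`α_swap` makes the probability flux `π(θ) r(θ,σ) α_swap(θ,σ)` equal to
`min (π(θ) r(θ,σ)) (π(θ_σ) r(θ_σ,σ⁻¹))`, which is symmetric under `(θ, σ) ↦ (θ_σ, σ⁻¹)`.
Substituting `θ ↦ θ_σ` therefore exchanges the flux from `A` to `B` through `σ` with the flux
from `B` to `A` through `σ⁻¹`; summing over the inversion-closed set `S_K` gives detailed balance,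
while the rejection part only charges `A ∩ B` and is symmetric anyway.
-/

theorem measurePreserving_comp_perm {ι α : Type*} [Fintype ι] [MeasurableSpace α]
    (μ : Measure α) [SigmaFinite μ] (σ : Equiv.Perm ι) :
    MeasurePreserving (fun x : ι → α => x ∘ σ) (Measure.pi fun _ => μ)
      (Measure.pi fun _ => μ) :=
  measurePreserving_arrowCongr' (fun _ => μ) (fun _ => μ) σ.symm (MeasurableEquiv.refl α)
    fun _ => .id μ

theorem ENNReal.mul_ite_min_one_div {a : ℝ≥0∞} (b : ℝ≥0∞) (ha : a ≠ ∞) :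
    a * (if 0 < a then min 1 (b / a) else 0) = min a b := by
  rcases eq_zero_or_pos a with rfl | ha₀
  · simp
  · rw [if_pos ha₀, mul_min, mul_one, ENNReal.mul_div_cancel ha₀.ne' ha]

section StayOrMove

variable {X G : Type*} [MeasurableSpace X]

noncomputable def stayOrMove (S : Finset G) (T : G → X → X) (c a : G → X → ℝ≥0∞) (x : X) :
    Measure X :=
  ∑ g ∈ S, (c g x • Measure.dirac x + a g x • Measure.dirac (T g x))

variable {S : Finset G} {T : G → X → X} {c a : G → X → ℝ≥0∞}

theorem stayOrMove_apply (x : X) {B : Set X} (hB : MeasurableSet B) :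
    stayOrMove S T c a x B =
      ∑ g ∈ S, (c g x * B.indicator 1 x + a g x * B.indicator 1 (T g x)) := by
  simp only [stayOrMove, Measure.finsetSum_apply, Measure.add_apply, Measure.smul_apply,
    Measure.dirac_apply' _ hB, smul_eq_mul]

theorem isProbabilityMeasure_stayOrMove {x : X} (h : ∑ g ∈ S, (c g x + a g x) = 1) :
    IsProbabilityMeasure (stayOrMove S T c a x) := by
  constructor
  simpa [stayOrMove_apply x MeasurableSet.univ] using h

theorem measurable_stayOrMove_apply (hc : ∀ g ∈ S, Measurable (c g))
    (ha : ∀ g ∈ S, Measurable (a g)) (hT : ∀ g ∈ S, Measurable (T g))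
    {B : Set X} (hB : MeasurableSet B) :
    Measurable fun x => stayOrMove S T c a x B := by
  simp only [stayOrMove_apply _ hB]
  have hBi : Measurable (B.indicator (1 : X → ℝ≥0∞)) := measurable_one.indicator hB
  exact Finset.measurable_sum _ fun g hg =>
    ((hc g hg).mul hBi).add ((ha g hg).mul (hBi.comp (hT g hg)))

theorem setLIntegral_mul_indicator (μ : Measure X) (f : X → ℝ≥0∞) (A : Set X) {B : Set X}
    (hB : MeasurableSet B) :
    ∫⁻ x in A, f x * B.indicator 1 x ∂μ = ∫⁻ x in A ∩ B, f x ∂μ := by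
  simp_rw [← Set.indicator_mul_right, Pi.one_apply, mul_one]
  rw [setLIntegral_indicator hB, Set.inter_comm]

/-- Substitute `y = T₁ x` on the left. -/
theorem setLIntegral_withDensity_move_comm {ν : Measure X} {π : X → ℝ≥0∞} (hπ : Measurable π)
    {T₁ T₂ : X → X} (hT₁ : MeasurePreserving T₁ ν ν) (hT₂ : Measurable T₂)
    (hT : ∀ x, T₂ (T₁ x) = x) {a₁ a₂ : X → ℝ≥0∞} (ha₁ : Measurable a₁) (ha₂ : Measurable a₂)
    (hbal : ∀ x, π x * a₁ x = π (T₁ x) * a₂ (T₁ x)) {A B : Set X}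
    (hA : MeasurableSet A) (hB : MeasurableSet B) :
    ∫⁻ x in A, a₁ x * B.indicator 1 (T₁ x) ∂ν.withDensity π =
      ∫⁻ x in B, a₂ x * A.indicator 1 (T₂ x) ∂ν.withDensity π := by
  have h₁ : Measurable fun x => a₁ x * B.indicator 1 (T₁ x) :=
    ha₁.mul ((measurable_one.indicator hB).comp hT₁.measurable)
  have h₂ : Measurable fun x => a₂ x * A.indicator 1 (T₂ x) :=
    ha₂.mul ((measurable_one.indicator hA).comp hT₂)
  rw [setLIntegral_withDensity_eq_setLIntegral_mul _ hπ h₁ hA,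
    setLIntegral_withDensity_eq_setLIntegral_mul _ hπ h₂ hB,
    ← lintegral_indicator hA, ← lintegral_indicator hB,
    ← hT₁.lintegral_comp ((hπ.mul h₂).indicator hB)]
  refine lintegral_congr fun x => ?_
  by_cases hx : x ∈ A <;> by_cases hTx : T₁ x ∈ B <;>
    simp [Set.indicator, hx, hTx, hT, hbal]

theorem setLIntegral_stayOrMove (μ : Measure X) (hc : ∀ g ∈ S, Measurable (c g))
    (ha : ∀ g ∈ S, Measurable (a g)) (hT : ∀ g ∈ S, Measurable (T g)) (A : Set X) {B : Set X}
    (hB : MeasurableSet B) :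
    ∫⁻ x in A, stayOrMove S T c a x B ∂μ =
      ∑ g ∈ S, ∫⁻ x in A ∩ B, c g x ∂μ +
        ∑ g ∈ S, ∫⁻ x in A, a g x * B.indicator 1 (T g x) ∂μ := by
  have hBi : Measurable (B.indicator (1 : X → ℝ≥0∞)) := measurable_one.indicator hB
  simp only [stayOrMove_apply _ hB, ← setLIntegral_mul_indicator μ _ A hB]
  rw [lintegral_finsetSum' S
      (f := fun g x => c g x * B.indicator 1 x + a g x * B.indicator 1 (T g x))
      fun g hg => (((hc g hg).mul hBi).add ((ha g hg).mul (hBi.comp (hT g hg)))).aemeasurable,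
    ← Finset.sum_add_distrib]
  exact Finset.sum_congr rfl fun g hg => lintegral_add_left ((hc g hg).mul hBi) _

theorem setLIntegral_stayOrMove_comm [InvolutiveInv G] {ν : Measure X} {π : X → ℝ≥0∞}
    (hπ : Measurable π) (hS : ∀ g ∈ S, g⁻¹ ∈ S) (hT : ∀ g ∈ S, MeasurePreserving (T g) ν ν)
    (hTinv : ∀ g ∈ S, ∀ x, T g⁻¹ (T g x) = x)
    (hc : ∀ g ∈ S, Measurable (c g)) (ha : ∀ g ∈ S, Measurable (a g))
    (hbal : ∀ g ∈ S, ∀ x, π x * a g x = π (T g x) * a g⁻¹ (T g x))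
    {A B : Set X} (hA : MeasurableSet A) (hB : MeasurableSet B) :
    ∫⁻ x in A, stayOrMove S T c a x B ∂ν.withDensity π =
      ∫⁻ x in B, stayOrMove S T c a x A ∂ν.withDensity π := by
  have hTm : ∀ g ∈ S, Measurable (T g) := fun g hg => (hT g hg).measurable
  rw [setLIntegral_stayOrMove _ hc ha hTm A hB, setLIntegral_stayOrMove _ hc ha hTm B hA,
    Set.inter_comm]
  congr 1
  refine Finset.sum_equiv (Equiv.inv G) (fun g => ⟨hS g, fun h => inv_inv g ▸ hS _ h⟩)
    fun g hg => ?_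
  exact setLIntegral_withDensity_move_comm hπ (hT g hg) (hTm _ (hS g hg)) (hTinv g hg)
    (ha g hg) (ha _ (hS g hg)) (hbal g hg) hA hB

end StayOrMove

section Metropolis

variable {X G : Type*} [InvolutiveInv G] (π : X → ℝ≥0∞) (T : G → X → X) (r : X → G → ℝ≥0∞)

noncomputable def metropolisAcceptance (x : X) (g : G) : ℝ≥0∞ :=
  if 0 < π x * r x g then min 1 (π (T g x) * r (T g x) g⁻¹ / (π x * r x g)) else 0

theorem metropolisAcceptance_le_one (x : X) (g : G) : metropolisAcceptance π T r x g ≤ 1 := by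
  unfold metropolisAcceptance
  split_ifs <;> simp

variable {π T r}

theorem measurable_metropolisAcceptance [MeasurableSpace X] (hπ : Measurable π) {g : G}
    (hT : Measurable (T g)) (hr : Measurable fun x => r x g) (hr' : Measurable fun x => r x g⁻¹) :
    Measurable fun x => metropolisAcceptance π T r x g := by
  have hden : Measurable fun x => π x * r x g := hπ.mul hr
  have hnum : Measurable fun x => π (T g x) * r (T g x) g⁻¹ := (hπ.comp hT).mul (hr'.comp hT)
  exact Measurable.ite (measurableSet_lt measurable_const hden)
    (measurable_const.min (hnum.div hden)) measurable_const

theorem mul_mul_metropolisAcceptance {x : X} {g : G} (hx : π x * r x g ≠ ∞) :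
    π x * (r x g * metropolisAcceptance π T r x g) =
      min (π x * r x g) (π (T g x) * r (T g x) g⁻¹) := by
  rw [← mul_assoc, metropolisAcceptance, ENNReal.mul_ite_min_one_div _ hx]

theorem mul_mul_metropolisAcceptance_comm {x : X} {g : G} (hT : T g⁻¹ (T g x) = x)
    (hx : π x * r x g ≠ ∞) (hTx : π (T g x) * r (T g x) g⁻¹ ≠ ∞) :
    π x * (r x g * metropolisAcceptance π T r x g) =
      π (T g x) * (r (T g x) g⁻¹ * metropolisAcceptance π T r (T g x) g⁻¹) := by
  rw [mul_mul_metropolisAcceptance hx, mul_mul_metropolisAcceptance hTx, hT, inv_inv, min_comm]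

end Metropolis

theorem swapping_kernel_reversible_general
    {Θ : Type*} [MeasurableSpace Θ] (K : ℕ)
    (μpr : Measure Θ) [IsProbabilityMeasure μpr]
    (μprK : Measure (Fin K → Θ)) (hμprK : μprK = Measure.pi fun _ => μpr)
    (π : (Fin K → Θ) → ℝ≥0∞) (hπm : Measurable π) (hπfin : ∀ θ, π θ ≠ ∞)
    (μ : Measure (Fin K → Θ)) (hμ : μ = μprK.withDensity π)
    (SK : Finset (Equiv.Perm (Fin K)))
    (hSKinv : ∀ σ ∈ SK, σ⁻¹ ∈ SK)
    (r : (Fin K → Θ) → Equiv.Perm (Fin K) → ℝ≥0∞)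
    (hrm : ∀ σ ∈ SK, Measurable fun θ => r θ σ)
    (hrsum : ∀ θ, ∑ σ ∈ SK, r θ σ = 1)
    (α : (Fin K → Θ) → Equiv.Perm (Fin K) → ℝ≥0∞)
    (hα : ∀ θ σ, α θ σ =
      if 0 < π θ * r θ σ then
        min 1 ((π (fun i => θ (σ i)) * r (fun i => θ (σ i)) σ⁻¹) / (π θ * r θ σ))
      else 0)
    (q : (Fin K → Θ) → Measure (Fin K → Θ))
    (hq : ∀ θ, q θ = ∑ σ ∈ SK,
      ((r θ σ * (1 - α θ σ)) • Measure.dirac θ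
        + (r θ σ * α θ σ) • Measure.dirac (fun i => θ (σ i)))) :
    (∀ θ, IsProbabilityMeasure (q θ)) ∧
    (∀ B : Set (Fin K → Θ), MeasurableSet B → Measurable fun θ => q θ B) ∧
    (∀ A B : Set (Fin K → Θ), MeasurableSet A → MeasurableSet B →
      ∫⁻ θ in A, q θ B ∂μ = ∫⁻ θ in B, q θ A ∂μ) := by
  set T : Equiv.Perm (Fin K) → (Fin K → Θ) → Fin K → Θ := fun σ θ => θ ∘ σ
  have hTinv : ∀ σ θ, T σ⁻¹ (T σ θ) = θ := fun σ θ => by ext; simp [T]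
  have hT : ∀ σ, MeasurePreserving (T σ) μprK μprK := hμprK ▸ measurePreserving_comp_perm μpr
  have hflux_ne_top : ∀ θ, ∀ σ ∈ SK, π θ * r θ σ ≠ ∞ := fun θ σ hσ => mul_ne_top (hπfin θ)
    (ne_top_of_le_ne_top one_ne_top (hrsum θ ▸ Finset.single_le_sum (fun _ _ => zero_le) hσ))
  obtain rfl : α = metropolisAcceptance π T r := funext fun θ => funext (hα θ)
  have hαm : ∀ σ ∈ SK, Measurable fun θ => metropolisAcceptance π T r θ σ := fun σ hσ =>
    measurable_metropolisAcceptance hπm (hT σ).measurable (hrm σ hσ) (hrm _ (hSKinv σ hσ))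
  have hc : ∀ σ ∈ SK, Measurable fun θ => r θ σ * (1 - metropolisAcceptance π T r θ σ) :=
    fun σ hσ => (hrm σ hσ).mul (measurable_const.sub (hαm σ hσ))
  have ha : ∀ σ ∈ SK, Measurable fun θ => r θ σ * metropolisAcceptance π T r θ σ :=
    fun σ hσ => (hrm σ hσ).mul (hαm σ hσ)
  obtain rfl : q = stayOrMove SK T _ _ := funext hq
  subst hμ
  refine ⟨fun θ => isProbabilityMeasure_stayOrMove ?_,
    fun B hB => measurable_stayOrMove_apply hc ha (fun σ _ => (hT σ).measurable) hB,
    fun A B hA hB => setLIntegral_stayOrMove_comm hπm hSKinv (fun σ _ => hT σ)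
      (fun σ _ => hTinv σ) hc ha (fun σ hσ θ => mul_mul_metropolisAcceptance_comm (hTinv σ θ)
        (hflux_ne_top θ σ hσ) (hflux_ne_top _ _ (hSKinv σ hσ))) hA hB⟩
  simp_rw [← mul_add, tsub_add_cancel_of_le (metropolisAcceptance_le_one π T r θ _), mul_one,
    hrsum]

/-- the generic swapping kernel
`q(θ,B) = ∑_{σ ∈ S_K} r(θ,σ) [(1 − α_swap(θ,σ)) δ_θ(B) + α_swap(θ,σ) δ_{θ_σ}(B)]`
built from a swapping ratio `r` and the Metropolis–Hastings swapping acceptance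
probability `α_swap` is a Markov kernel on `Θ^K`, reversible with respect to the
measure `μ` with density `π` w.r.t. the `K`-fold product prior `μ_pr^K`. -/
theorem swapping_kernel_reversible
    {Θ : Type*} [MeasurableSpace Θ] (K : ℕ) (hK : 1 ≤ K)
    (μpr : Measure Θ) [IsProbabilityMeasure μpr]
    (μprK : Measure (Fin K → Θ)) (hμprK : μprK = Measure.pi fun _ => μpr)
    (π : (Fin K → Θ) → ℝ≥0∞) (hπm : Measurable π) (hπfin : ∀ θ, π θ ≠ ∞)
    (hπint : ∫⁻ θ, π θ ∂μprK = 1)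
    (μ : Measure (Fin K → Θ)) (hμ : μ = μprK.withDensity π)
    (SK : Finset (Equiv.Perm (Fin K))) (hSKne : SK.Nonempty)
    (hSKinv : ∀ σ ∈ SK, σ⁻¹ ∈ SK)
    (r : (Fin K → Θ) → Equiv.Perm (Fin K) → ℝ≥0∞)
    (hrm : ∀ σ ∈ SK, Measurable fun θ => r θ σ)
    (hrle : ∀ θ, ∀ σ ∈ SK, r θ σ ≤ 1)
    (hrsum : ∀ θ, ∑ σ ∈ SK, r θ σ = 1)
    (α : (Fin K → Θ) → Equiv.Perm (Fin K) → ℝ≥0∞)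
    (hα : ∀ θ σ, α θ σ =
      if 0 < π θ * r θ σ then
        min 1 ((π (fun i => θ (σ i)) * r (fun i => θ (σ i)) σ⁻¹) / (π θ * r θ σ))
      else 0)
    (q : (Fin K → Θ) → Measure (Fin K → Θ))
    (hq : ∀ θ, q θ = ∑ σ ∈ SK,
      ((r θ σ * (1 - α θ σ)) • Measure.dirac θ
        + (r θ σ * α θ σ) • Measure.dirac (fun i => θ (σ i)))) :
    (∀ θ, IsProbabilityMeasure (q θ)) ∧
    (∀ B : Set (Fin K → Θ), MeasurableSet B → Measurable fun θ => q θ B) ∧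
    (∀ A B : Set (Fin K → Θ), MeasurableSet A → MeasurableSet B →
      ∫⁻ θ in A, q θ B ∂μ = ∫⁻ θ in B, q θ A ∂μ) :=
  swapping_kernel_reversible_general K μpr μprK hμprK π hπm hπfin μ hμ SK hSKinv r hrm hrsum α hα q
    hq
end

section
/- Let (W, 𝒲) be a measurable space, ν a probability measure on W, and let a and b be Markov kernels on W, each reversible with respect to ν. Then the palindromic composition a∘b∘a, i.e. the Markov kernel (a∘b∘a)(θ, A) := ∫∫ a(z', A) b(z, dz') a(θ, dz), is reversible with respect to ν. -/
open MeasureTheory ProbabilityTheory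

/-!
Reversibility of `κ` with respect to `π` means that the joint law `π ⊗ₘ κ` of one step is invariant
under swapping coordinates, i.e. that `κ` acts as a self-adjoint operator on nonnegative functions:
`∫ f · κ g dπ = ∫ κ f · g dπ`. Moving the kernels across the pairing one at a time,
`∫ 1_A · a b a 1_B = ∫ a 1_A · b a 1_B = ∫ b a 1_A · a 1_B = ∫ a b a 1_A · 1_B`.
-/

namespace ProbabilityTheory.Kernel

variable {α : Type*} [MeasurableSpace α] {κ : Kernel α α} {π : Measure α}

lemma IsReversible.compProd_map_swap [IsFiniteMeasure π] [IsFiniteKernel κ]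
    (h : IsReversible κ π) : (π ⊗ₘ κ).map Prod.swap = π ⊗ₘ κ := by
  refine Measure.ext_prod fun {A B} hA hB => ?_
  rw [Measure.map_apply measurable_swap (hA.prod hB), Set.preimage_swap_prod,
    Measure.compProd_apply_prod hB hA, Measure.compProd_apply_prod hA hB, h hA hB]

lemma IsReversible.lintegral_mul_lintegral_comm [IsFiniteMeasure π] [IsFiniteKernel κ]
    (h : IsReversible κ π) {f g : α → ENNReal} (hf : Measurable f) (hg : Measurable g) :
    ∫⁻ x, f x * ∫⁻ y, g y ∂κ x ∂π = ∫⁻ x, (∫⁻ y, f y ∂κ x) * g x ∂π := by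
  have hfg : Measurable fun p : α × α => f p.1 * g p.2 :=
    (hf.comp measurable_fst).mul (hg.comp measurable_snd)
  calc ∫⁻ x, f x * ∫⁻ y, g y ∂κ x ∂π
      = ∫⁻ p, f p.1 * g p.2 ∂(π ⊗ₘ κ) := by
        rw [Measure.lintegral_compProd hfg]
        simp_rw [lintegral_const_mul _ hg]
    _ = ∫⁻ p, f p.2 * g p.1 ∂(π ⊗ₘ κ) := by
        conv_lhs => rw [← h.compProd_map_swap]
        rw [MeasureTheory.lintegral_map hfg measurable_swap]
        rfl
    _ = ∫⁻ x, (∫⁻ y, f y ∂κ x) * g x ∂π := by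
        rw [Measure.lintegral_compProd (f := fun p => f p.2 * g p.1) (by fun_prop)]
        simp_rw [lintegral_mul_const _ hf]

lemma IsReversible.setLIntegral_lintegral [IsFiniteMeasure π] [IsFiniteKernel κ]
    (h : IsReversible κ π) {A : Set α} (hA : MeasurableSet A) {g : α → ENNReal}
    (hg : Measurable g) :
    ∫⁻ x in A, ∫⁻ y, g y ∂κ x ∂π = ∫⁻ x, κ x A * g x ∂π := by
  calc ∫⁻ x in A, ∫⁻ y, g y ∂κ x ∂π
      = ∫⁻ x, A.indicator 1 x * ∫⁻ y, g y ∂κ x ∂π := by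
        rw [← lintegral_indicator hA]
        congr 1 with x
        by_cases hx : x ∈ A <;> simp [hx]
    _ = ∫⁻ x, κ x A * g x ∂π := by
        rw [h.lintegral_mul_lintegral_comm (measurable_one.indicator hA) hg]
        simp only [lintegral_indicator_one hA]

end ProbabilityTheory.Kernel

/-- the palindromic composition `a ∘ b ∘ a` (first `a`, then `b`, then `a`)
of two `ν`-reversible Markov kernels is itself reversible with respect to `ν`. -/
theorem palindromic_composition_reversible
    {W : Type*} [MeasurableSpace W]
    (ν : Measure W) [IsProbabilityMeasure ν]
    (a b : Kernel W W) [IsMarkovKernel a] [IsMarkovKernel b]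
    (ha : ∀ A B : Set W, MeasurableSet A → MeasurableSet B →
      ∫⁻ θ in A, a θ B ∂ν = ∫⁻ θ in B, a θ A ∂ν)
    (hb : ∀ A B : Set W, MeasurableSet A → MeasurableSet B →
      ∫⁻ θ in A, b θ B ∂ν = ∫⁻ θ in B, b θ A ∂ν)
    (aba : W → Set W → ENNReal)
    (haba : ∀ θ A, aba θ A = ∫⁻ z, ∫⁻ z', a z' A ∂(b z) ∂(a θ)) :
    ∀ A B : Set W, MeasurableSet A → MeasurableSet B →
      ∫⁻ θ in A, aba θ B ∂ν = ∫⁻ θ in B, aba θ A ∂ν := by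
  have ha' : a.IsReversible ν := fun A B => ha A B
  have hb' : b.IsReversible ν := fun A B => hb A B
  have key : ∀ A B : Set W, MeasurableSet A → MeasurableSet B →
      ∫⁻ θ in A, aba θ B ∂ν = ∫⁻ z, a z A * ∫⁻ z', a z' B ∂(b z) ∂ν := fun A B hA hB => by
    simp only [haba]
    exact ha'.setLIntegral_lintegral hA (a.measurable_coe hB).lintegral_kernel
  intro A B hA hB
  rw [key A B hA hB, key B A hB hA,
    hb'.lintegral_mul_lintegral_comm (a.measurable_coe hA) (a.measurable_coe hB)]
  exact lintegral_congr fun z => mul_comm _ _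
end

section
/- Let Θ be a measurable space, K ≥ 1, let S_K be a subgroup of the symmetric group on {1,…,K}, and let π : Θ^K → [0,∞) be measurable. Define the unweighted swapping ratio r^{UW}(θ,σ) := π(θ_σ) / Σ_{σ'∈S_K} π(θ_{σ'}) whenever the denominator is positive. Then for every θ ∈ Θ^K with τ(θ) := Σ_{σ'∈S_K} π(θ_{σ'}) > 0 and every σ ∈ S_K one has the detailed-balance identity π(θ_σ) · r^{UW}(θ_σ, σ⁻¹) = π(θ) · r^{UW}(θ,σ); consequently, whenever additionally π(θ) > 0 and π(θ_σ) > 0, the Metropolis–Hastings swapping acceptance probability α_swap(θ,σ) = min{1, π(θ_σ) r^{UW}(θ_σ,σ⁻¹) / (π(θ) r^{UW}(θ,σ))} equals 1 (Unweighted Generalized Parallel Tempering is rejection-free). -/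
open Finset

/-- detailed balance for the unweighted swapping ratio
`r^{UW}(θ,σ) = π(θ_σ)/∑_{σ'∈S_K} π(θ_{σ'})`, and the resulting
Metropolis–Hastings swapping acceptance probability equals 1
(UGPT is rejection-free). -/
theorem ugpt_rejection_free
    {Θ : Type*} [MeasurableSpace Θ] (K : ℕ) (hK : 1 ≤ K)
    (π : (Fin K → Θ) → ℝ) (hπm : Measurable π) (hπnn : ∀ θ, 0 ≤ π θ)
    (SK : Finset (Equiv.Perm (Fin K)))
    (hSKid : 1 ∈ SK)
    (hSKinv : ∀ σ ∈ SK, σ⁻¹ ∈ SK)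
    (hSKmul : ∀ σ ∈ SK, ∀ ρ ∈ SK, σ * ρ ∈ SK)
    (τ : (Fin K → Θ) → ℝ)
    (hτ : ∀ θ, τ θ = ∑ σ' ∈ SK, π (fun i => θ (σ' i)))
    (r : (Fin K → Θ) → Equiv.Perm (Fin K) → ℝ)
    (hr : ∀ θ σ, r θ σ = π (fun i => θ (σ i)) / τ θ) :
    ∀ θ : Fin K → Θ, ∀ σ ∈ SK, 0 < τ θ →
      (π (fun i => θ (σ i)) * r (fun i => θ (σ i)) σ⁻¹ = π θ * r θ σ) ∧
      (0 < π θ → 0 < π (fun i => θ (σ i)) →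
        min 1 ((π (fun i => θ (σ i)) * r (fun i => θ (σ i)) σ⁻¹) / (π θ * r θ σ)) = 1) := by
  intro θ σ hσ hτθ
  have hτeq : τ (fun i => θ (σ i)) = τ θ := by
    rw [hτ, hτ]
    refine Finset.sum_nbij' (fun ρ => σ * ρ) (fun ρ => σ⁻¹ * ρ) ?_ ?_ ?_ ?_ ?_
    · intro ρ hρ; exact hSKmul σ hσ ρ hρ
    · intro ρ hρ; exact hSKmul σ⁻¹ (hSKinv σ hσ) ρ hρ
    · intro ρ _; group
    · intro ρ _; group
    · intro ρ _; rfl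
  have hθback : (fun i => (fun j => θ (σ j)) (σ⁻¹ i)) = θ := by
    funext i; simp
  have h1 : π (fun i => θ (σ i)) * r (fun i => θ (σ i)) σ⁻¹ = π θ * r θ σ := by
    rw [hr, hr, hτeq, hθback]; ring
  refine ⟨h1, fun hπθ hπθσ => ?_⟩
  rw [h1, div_self, min_self]
  rw [hr]
  positivity
end

section
/- Let Θ be a measurable space, K ≥ 1, let μ_pr be a probability measure on Θ and μ_pr^K its K-fold product. Let π_1,…,π_K : Θ → [0,∞) be measurable with ∫ π_k dμ_pr = 1, let S_K be a nonempty finite set of permutations of {1,…,K}, for σ ∈ S_K let μ_σ be the probability measure on Θ^K with density π_σ(θ) := ∏_{k=1}^K π_{σ(k)}(θ_k) with respect to μ_pr^K, and let μ_W be the probability measure with density π_W := (1/|S_K|) Σ_{σ∈S_K} π_σ. Assume the minimal pairwise overlap Λ_m := min_{σ,ρ∈S_K} ∫ min(π_σ(θ), π_ρ(θ)) μ_pr^K(dθ) is positive. Then for every f ∈ L2(Θ^K, μ_W) with ∫ f dμ_W = 0, one has (Λ_m/(2 − Λ_m)) · Var_{μ_W}(f) ≤ (1/|S_K|) Σ_{σ∈S_K}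 Var_{μ_σ}(f). -/
/-!
For `σ, ρ`, let `κ` have density `min (π_σ, π_ρ)`: it lies below both `μ_σ` and `μ_ρ` and has mass
`λ ≥ Λ_m`, so the remainders `μ_σ - κ` and `μ_ρ - κ` have mass `1 - λ`. Centre `f` at the midpoint
of its means `E_σ f`, `E_ρ f`; the `κ`-parts cancel in `E_σ f - E_ρ f`, and Cauchy–Schwarz on the
remainders gives `λ (E_σ f - E_ρ f)² ≤ 2 (1 - λ) (Var_σ f + Var_ρ f)`. Summing over all pairs and
using the law of total variance for the uniform mixture `μ_W`,
`Var_W f = avg Var_σ f + avg (E_σ f - E_W f)²`, gives the bound.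
-/

open MeasureTheory ProbabilityTheory ENNReal Finset

lemma Finset.sum_sum_sub_sq {ι : Type*} (s : Finset ι) (m : ι → ℝ) :
    ∑ i ∈ s, ∑ j ∈ s, (m i - m j) ^ 2 = 2 * (#s * ∑ i ∈ s, m i ^ 2 - (∑ i ∈ s, m i) ^ 2) := by
  simp only [sub_sq, sum_add_distrib, sum_sub_distrib, sum_const, nsmul_eq_mul, ← mul_sum,
    ← sum_mul]
  ring

lemma div_two_sub_mul_le_card_mul_sum {ι : Type*} (s : Finset ι) (m V : ι → ℝ) {Λ : ℝ}
    (hΛ : Λ < 2) (h : ∀ i ∈ s, ∀ j ∈ s, Λ * (m i - m j) ^ 2 ≤ 2 * (1 - Λ) * (V i + V j)) :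
    Λ / (2 - Λ) * (#s * ∑ i ∈ s, (V i + m i ^ 2) - (∑ i ∈ s, m i) ^ 2) ≤ #s * ∑ i ∈ s, V i := by
  have hsum := sum_le_sum fun i hi => sum_le_sum fun j hj => h i hi j hj
  simp only [← mul_sum, Finset.sum_sum_sub_sq, sum_add_distrib, sum_const, nsmul_eq_mul] at hsum
  rw [div_mul_eq_mul_div, div_le_iff₀ (by linarith), sum_add_distrib]
  linarith

section

variable {α : Type*} [MeasurableSpace α]

lemma variance_eq_integral_sq_sub {μ : Measure α} [IsProbabilityMeasure μ] {f : α → ℝ}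
    (hf : MemLp f 2 μ) :
    Var[f; μ] = ∫ x, f x ^ 2 ∂μ - (∫ x, f x ∂μ) ^ 2 :=
  variance_eq_sub hf

lemma sq_integral_le_measureReal_univ_mul_integral_sq {μ : Measure α} [IsFiniteMeasure μ]
    {g : α → ℝ} (hg : MemLp g 2 μ) :
    (∫ x, g x ∂μ) ^ 2 ≤ μ.real Set.univ * ∫ x, g x ^ 2 ∂μ := by
  rcases eq_zero_or_neZero μ with rfl | hμ
  · simp
  have hvar := variance_nonneg g ((μ Set.univ)⁻¹ • μ)
  rw [variance_eq_integral_sq_sub (hg.smul_measure (by simp [hμ.out]))] at hvar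
  simp only [integral_smul_measure, ENNReal.toReal_inv, ← measureReal_def, smul_eq_mul] at hvar
  have := mul_le_mul_of_nonneg_left (sub_nonneg.1 hvar) (sq_nonneg (μ.real Set.univ))
  field_simp at this
  linarith

lemma integral_sub_const_sq {μ : Measure α} [IsProbabilityMeasure μ] {f : α → ℝ}
    (hf : MemLp f 2 μ) (c : ℝ) :
    ∫ x, (f x - c) ^ 2 ∂μ = Var[f; μ] + (∫ x, f x - c ∂μ) ^ 2 := by
  rw [← variance_sub_const hf.aestronglyMeasurable c, variance_eq_sub (X := fun x => f x - c)
    (hf.sub (memLp_const c))]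
  simp

lemma sq_integral_sub_integral_le {μ κ : Measure α} [IsFiniteMeasure μ] (hκ : κ ≤ μ)
    {g : α → ℝ} (hg : MemLp g 2 μ) :
    (∫ x, g x ∂μ - ∫ x, g x ∂κ) ^ 2 ≤ (μ.real Set.univ - κ.real Set.univ) * ∫ x, g x ^ 2 ∂μ := by
  have : IsFiniteMeasure κ := isFiniteMeasure_of_le μ hκ
  set ν := μ - κ
  have hμ : μ = ν + κ := (Measure.sub_add_cancel_of_le hκ).symm
  have hν : ν ≤ μ := Measure.sub_le
  have hνg : MemLp g 2 ν := hg.mono_measure hν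
  have hmass : ν.real Set.univ = μ.real Set.univ - κ.real Set.univ := by
    simp only [measureReal_def, ν, Measure.sub_apply MeasurableSet.univ hκ]
    exact ENNReal.toReal_sub_of_le (hκ Set.univ) (measure_ne_top μ _)
  calc (∫ x, g x ∂μ - ∫ x, g x ∂κ) ^ 2 = (∫ x, g x ∂ν) ^ 2 := by
        rw [hμ, integral_add_measure (hνg.integrable one_le_two)
          ((hg.mono_measure hκ).integrable one_le_two), add_sub_cancel_right]
    _ ≤ ν.real Set.univ * ∫ x, g x ^ 2 ∂ν := sq_integral_le_measureReal_univ_mul_integral_sq hνg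
    _ ≤ (μ.real Set.univ - κ.real Set.univ) * ∫ x, g x ^ 2 ∂μ := by
        rw [← hmass]
        gcongr
        exacts [ae_of_all _ fun x => sq_nonneg (g x), hg.integrable_sq]

lemma measureReal_mul_sq_integral_sub_le {μ₁ μ₂ κ : Measure α} [IsProbabilityMeasure μ₁]
    [IsProbabilityMeasure μ₂] (hκ₁ : κ ≤ μ₁) (hκ₂ : κ ≤ μ₂) {f : α → ℝ} (hf₁ : MemLp f 2 μ₁)
    (hf₂ : MemLp f 2 μ₂) :
    κ.real Set.univ * (∫ x, f x ∂μ₁ - ∫ x, f x ∂μ₂) ^ 2 ≤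
      2 * (1 - κ.real Set.univ) * (Var[f; μ₁] + Var[f; μ₂]) := by
  set d := ∫ x, f x ∂μ₁ - ∫ x, f x ∂μ₂
  set c := (∫ x, f x ∂μ₁ + ∫ x, f x ∂μ₂) / 2
  have hg₁ : MemLp (fun x => f x - c) 2 μ₁ := hf₁.sub (memLp_const c)
  have hg₂ : MemLp (fun x => f x - c) 2 μ₂ := hf₂.sub (memLp_const c)
  have hmean₁ : ∫ x, f x - c ∂μ₁ = d / 2 := by
    rw [integral_sub (hf₁.integrable one_le_two) (integrable_const c)]; simp [d, c]; ring
  have hmean₂ : ∫ x, f x - c ∂μ₂ = -(d / 2) := by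
    rw [integral_sub (hf₂.integrable one_le_two) (integrable_const c)]; simp [d, c]; ring
  have h₁ := sq_integral_sub_integral_le hκ₁ hg₁
  have h₂ := sq_integral_sub_integral_le hκ₂ hg₂
  rw [integral_sub_const_sq hf₁, hmean₁, probReal_univ] at h₁
  rw [integral_sub_const_sq hf₂, hmean₂, probReal_univ] at h₂
  set w := ∫ x, f x - c ∂κ
  -- `d = (d/2 - w) - (-(d/2) - w)`, and `(a - b)² ≤ 2a² + 2b²`
  have hd : d ^ 2 ≤ 2 * (d / 2 - w) ^ 2 + 2 * (-(d / 2) - w) ^ 2 := by linarith [sq_nonneg w]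
  linarith

section Mixture

variable {ι : Type*} {s : Finset ι} {μ : ι → Measure α}

lemma isProbabilityMeasure_inv_card_smul_sum [∀ i, IsProbabilityMeasure (μ i)]
    (hs : s.Nonempty) : IsProbabilityMeasure ((#s : ℝ≥0∞)⁻¹ • ∑ i ∈ s, μ i) := by
  constructor
  simp [ENNReal.inv_mul_cancel (Nat.cast_ne_zero.2 hs.card_pos.ne') (natCast_ne_top _)]

lemma MeasureTheory.MemLp.of_inv_card_smul_sum {ε : Type*} [TopologicalSpace ε] [ContinuousENorm ε]
    {f : α → ε} {p : ℝ≥0∞}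
    (hf : MemLp f p ((#s : ℝ≥0∞)⁻¹ • ∑ i ∈ s, μ i)) {i : ι} (hi : i ∈ s) : MemLp f p (μ i) := by
  refine hf.of_measure_le_smul (c := #s) (natCast_ne_top _) ?_
  rw [smul_smul, ENNReal.mul_inv_cancel (Nat.cast_ne_zero.2 (card_ne_zero_of_mem hi))
    (natCast_ne_top _), one_smul]
  exact single_le_sum (f := μ) (fun j _ => Measure.zero_le _) hi

lemma integral_inv_card_smul_sum {f : α → ℝ} (hf : ∀ i ∈ s, Integrable f (μ i)) :
    ∫ x, f x ∂((#s : ℝ≥0∞)⁻¹ • ∑ i ∈ s, μ i) = (#s : ℝ)⁻¹ * ∑ i ∈ s, ∫ x, f x ∂μ i := by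
  rw [integral_smul_measure, integral_finsetSum_measure hf]
  simp

lemma variance_inv_card_smul_sum [∀ i, IsProbabilityMeasure (μ i)] (hs : s.Nonempty)
    {f : α → ℝ} (hf : MemLp f 2 ((#s : ℝ≥0∞)⁻¹ • ∑ i ∈ s, μ i)) :
    Var[f; (#s : ℝ≥0∞)⁻¹ • ∑ i ∈ s, μ i] =
      (#s : ℝ)⁻¹ * ∑ i ∈ s, (Var[f; μ i] + (∫ x, f x ∂μ i) ^ 2) -
        ((#s : ℝ)⁻¹ * ∑ i ∈ s, ∫ x, f x ∂μ i) ^ 2 := by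
  have := isProbabilityMeasure_inv_card_smul_sum (μ := μ) hs
  have hfi (i) (hi : i ∈ s) : MemLp f 2 (μ i) := hf.of_inv_card_smul_sum hi
  rw [variance_eq_integral_sq_sub hf,
    integral_inv_card_smul_sum fun i hi => (hfi i hi).integrable_sq,
    integral_inv_card_smul_sum fun i hi => (hfi i hi).integrable one_le_two]
  congr 2
  exact sum_congr rfl fun i hi => by rw [variance_eq_integral_sq_sub (hfi i hi), sub_add_cancel]

theorem div_two_sub_mul_variance_inv_card_smul_sum_le [∀ i, IsProbabilityMeasure (μ i)]
    (hs : s.Nonempty) {κ : ι → ι → Measure α}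
    (hκ : ∀ i ∈ s, ∀ j ∈ s, κ i j ≤ μ i ∧ κ i j ≤ μ j) {Λ : ℝ}
    (hΛ : ∀ i ∈ s, ∀ j ∈ s, Λ ≤ (κ i j).real Set.univ)
    {f : α → ℝ} (hf : MemLp f 2 ((#s : ℝ≥0∞)⁻¹ • ∑ i ∈ s, μ i)) :
    Λ / (2 - Λ) * Var[f; (#s : ℝ≥0∞)⁻¹ • ∑ i ∈ s, μ i] ≤
      (#s : ℝ)⁻¹ * ∑ i ∈ s, Var[f; μ i] := by
  have hfi (i) (hi : i ∈ s) : MemLp f 2 (μ i) := hf.of_inv_card_smul_sum hi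
  have hΛ1 : Λ ≤ 1 := by
    obtain ⟨i, hi⟩ := hs
    calc Λ ≤ (κ i i).real Set.univ := hΛ i hi i hi
      _ ≤ (μ i).real Set.univ := ENNReal.toReal_mono (measure_ne_top _ _) ((hκ i hi i hi).1 _)
      _ = 1 := probReal_univ
  have hpair : ∀ i ∈ s, ∀ j ∈ s, Λ * (∫ x, f x ∂μ i - ∫ x, f x ∂μ j) ^ 2 ≤
      2 * (1 - Λ) * (Var[f; μ i] + Var[f; μ j]) := by
    intro i hi j hj
    obtain ⟨hκi, hκj⟩ := hκ i hi j hj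
    calc Λ * (∫ x, f x ∂μ i - ∫ x, f x ∂μ j) ^ 2
        ≤ (κ i j).real Set.univ * (∫ x, f x ∂μ i - ∫ x, f x ∂μ j) ^ 2 := by
          gcongr; exact hΛ i hi j hj
      _ ≤ 2 * (1 - (κ i j).real Set.univ) * (Var[f; μ i] + Var[f; μ j]) :=
          measureReal_mul_sq_integral_sub_le hκi hκj (hfi i hi) (hfi j hj)
      _ ≤ 2 * (1 - Λ) * (Var[f; μ i] + Var[f; μ j]) := by
          have := variance_nonneg f (μ i)
          have := variance_nonneg f (μ j)
          gcongr; exact hΛ i hi j hj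
  have key := div_two_sub_mul_le_card_mul_sum s (fun i => ∫ x, f x ∂μ i) (fun i => Var[f; μ i])
    (by linarith) hpair
  rw [variance_inv_card_smul_sum hs hf]
  set N : ℝ := (#s : ℝ)
  calc Λ / (2 - Λ) * (N⁻¹ * ∑ i ∈ s, (Var[f; μ i] + (∫ x, f x ∂μ i) ^ 2)
        - (N⁻¹ * ∑ i ∈ s, ∫ x, f x ∂μ i) ^ 2)
      = N⁻¹ ^ 2 * (Λ / (2 - Λ) * (N * ∑ i ∈ s, (Var[f; μ i] + (∫ x, f x ∂μ i) ^ 2)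
        - (∑ i ∈ s, ∫ x, f x ∂μ i) ^ 2)) := by field_simp
    _ ≤ N⁻¹ ^ 2 * (N * ∑ i ∈ s, Var[f; μ i]) := by gcongr
    _ = N⁻¹ * ∑ i ∈ s, Var[f; μ i] := by field_simp

end Mixture
end

lemma lintegral_pi_prod_eq_prod {ι : Type*} [Fintype ι] {Ω : ι → Type*}
    [∀ i, MeasurableSpace (Ω i)] (μ : ∀ i, Measure (Ω i)) [∀ i, IsProbabilityMeasure (μ i)]
    {g : ∀ i, Ω i → ℝ≥0∞} (hg : ∀ i, Measurable (g i)) :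
    ∫⁻ x, ∏ i, g i (x i) ∂Measure.pi μ = ∏ i, ∫⁻ y, g i y ∂μ i := by
  refine (lintegral_prod_eq_prod_lintegral_of_indepFun univ (fun i (x : ∀ i, Ω i) => g i (x i))
    (iIndepFun_pi fun i => (hg i).aemeasurable) fun i => (hg i).comp (measurable_pi_apply i)).trans
    (prod_congr rfl fun i _ => (measurePreserving_eval μ i).lintegral_comp (hg i))

lemma isProbabilityMeasure_pi_withDensity_prod {ι : Type*} [Fintype ι] {Ω : ι → Type*}
    [∀ i, MeasurableSpace (Ω i)] (μ : ∀ i, Measure (Ω i)) [∀ i, IsProbabilityMeasure (μ i)]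
    {g : ∀ i, Ω i → ℝ≥0∞} (hg : ∀ i, Measurable (g i)) (hg1 : ∀ i, ∫⁻ y, g i y ∂μ i = 1) :
    IsProbabilityMeasure ((Measure.pi μ).withDensity fun x => ∏ i, g i (x i)) :=
  ⟨by simp [withDensity_apply _ MeasurableSet.univ, lintegral_pi_prod_eq_prod μ hg, hg1]⟩

lemma withDensity_finsetSum {α ι : Type*} [MeasurableSpace α] (μ : Measure α) (s : Finset ι)
    {f : ι → α → ℝ≥0∞} (hf : ∀ i ∈ s, Measurable (f i)) :
    μ.withDensity (∑ i ∈ s, f i) = ∑ i ∈ s, μ.withDensity (f i) := by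
  classical
  induction s using Finset.induction with
  | empty => simp
  | insert i s hi ih =>
    rw [sum_insert hi, sum_insert hi, withDensity_add_left (hf i (mem_insert_self i s)),
      ih fun j hj => hf j (mem_insert_of_mem hj)]

theorem mixture_variance_lower_bound_general
    {Θ : Type*} [MeasurableSpace Θ] (K : ℕ)
    (μpr : Measure Θ) [IsProbabilityMeasure μpr]
    (μprK : Measure (Fin K → Θ)) (hμprK : μprK = Measure.pi fun _ => μpr)
    (πk : Fin K → Θ → ℝ≥0∞) (hπkm : ∀ k, Measurable (πk k))
    (hπkint : ∀ k, ∫⁻ x, πk k x ∂μpr = 1)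
    (SK : Finset (Equiv.Perm (Fin K))) (hSKne : SK.Nonempty)
    (πσ : Equiv.Perm (Fin K) → (Fin K → Θ) → ℝ≥0∞)
    (hπσ : ∀ σ θ, πσ σ θ = ∏ k, πk (σ k) (θ k))
    (μσ : Equiv.Perm (Fin K) → Measure (Fin K → Θ))
    (hμσ : ∀ σ, μσ σ = μprK.withDensity (πσ σ))
    (πW : (Fin K → Θ) → ℝ≥0∞)
    (hπW : ∀ θ, πW θ = (SK.card : ℝ≥0∞)⁻¹ * ∑ σ ∈ SK, πσ σ θ)
    (μW : Measure (Fin K → Θ)) (hμW : μW = μprK.withDensity πW)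
    (Λm : ℝ)
    (hΛm : Λm = (SK ×ˢ SK).inf' (hSKne.product hSKne)
      (fun sr => (∫⁻ θ, min (πσ sr.1 θ) (πσ sr.2 θ) ∂μprK).toReal)) :
    ∀ f : (Fin K → Θ) → ℝ, MemLp f 2 μW → ∫ θ, f θ ∂μW = 0 →
      Λm / (2 - Λm) * (∫ θ, f θ ^ 2 ∂μW - (∫ θ, f θ ∂μW) ^ 2) ≤
        (SK.card : ℝ)⁻¹ * ∑ σ ∈ SK,
          (∫ θ, f θ ^ 2 ∂(μσ σ) - (∫ θ, f θ ∂(μσ σ)) ^ 2) := by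
  intro f hf _
  have hπσ_eq (σ) : πσ σ = fun θ => ∏ k, πk (σ k) (θ k) := funext (hπσ σ)
  have hπσm (σ) : Measurable (πσ σ) := by
    rw [hπσ_eq]; exact measurable_prod _ fun k _ => (hπkm (σ k)).comp (measurable_pi_apply k)
  have hprob (σ) : IsProbabilityMeasure (μσ σ) := by
    rw [hμσ, hπσ_eq, hμprK]
    exact isProbabilityMeasure_pi_withDensity_prod _ (fun k => hπkm (σ k)) fun k => hπkint (σ k)
  have hmix : μW = (#SK : ℝ≥0∞)⁻¹ • ∑ σ ∈ SK, μσ σ := by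
    have : πW = (#SK : ℝ≥0∞)⁻¹ • ∑ σ ∈ SK, πσ σ := funext fun θ => by simp [hπW]
    rw [hμW, this, withDensity_smul' _ _ (by simpa using hSKne.ne_empty),
      withDensity_finsetSum _ _ fun σ _ => hπσm σ]
    simp_rw [hμσ]
  rw [hmix] at hf ⊢
  have hfσ (σ) (hσ : σ ∈ SK) : MemLp f 2 (μσ σ) := hf.of_inv_card_smul_sum hσ
  have := isProbabilityMeasure_inv_card_smul_sum (μ := μσ) hSKne
  rw [← variance_eq_integral_sq_sub hf,
    sum_congr rfl fun σ hσ => (variance_eq_integral_sq_sub (hfσ σ hσ)).symm]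
  refine div_two_sub_mul_variance_inv_card_smul_sum_le hSKne
    (κ := fun σ ρ => μprK.withDensity fun θ => min (πσ σ θ) (πσ ρ θ)) ?_ ?_ hf
  · intro σ _ ρ _
    simp only [hμσ]
    exact ⟨withDensity_mono (ae_of_all _ fun θ => min_le_left _ _),
      withDensity_mono (ae_of_all _ fun θ => min_le_right _ _)⟩
  · intro σ hσ ρ hρ
    rw [hΛm, measureReal_def, withDensity_apply _ MeasurableSet.univ, setLIntegral_univ]
    exact inf'_le _ (mk_mem_product hσ hρ)

/-- if the minimal pairwise overlap `Λ_m` of the swapped product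
densities is positive, then for every mean-zero `f ∈ L2(μ_W)`,
`(Λ_m/(2 − Λ_m)) Var_{μ_W}(f) ≤ (1/|S_K|) ∑_σ Var_{μ_σ}(f)`. -/
theorem mixture_variance_lower_bound
    {Θ : Type*} [MeasurableSpace Θ] (K : ℕ) (hK : 1 ≤ K)
    (μpr : Measure Θ) [IsProbabilityMeasure μpr]
    (μprK : Measure (Fin K → Θ)) (hμprK : μprK = Measure.pi fun _ => μpr)
    (πk : Fin K → Θ → ℝ≥0∞) (hπkm : ∀ k, Measurable (πk k))
    (hπkfin : ∀ k x, πk k x ≠ ∞) (hπkint : ∀ k, ∫⁻ x, πk k x ∂μpr = 1)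
    (SK : Finset (Equiv.Perm (Fin K))) (hSKne : SK.Nonempty)
    (πσ : Equiv.Perm (Fin K) → (Fin K → Θ) → ℝ≥0∞)
    (hπσ : ∀ σ θ, πσ σ θ = ∏ k, πk (σ k) (θ k))
    (μσ : Equiv.Perm (Fin K) → Measure (Fin K → Θ))
    (hμσ : ∀ σ, μσ σ = μprK.withDensity (πσ σ))
    (πW : (Fin K → Θ) → ℝ≥0∞)
    (hπW : ∀ θ, πW θ = (SK.card : ℝ≥0∞)⁻¹ * ∑ σ ∈ SK, πσ σ θ)
    (μW : Measure (Fin K → Θ)) (hμW : μW = μprK.withDensity πW)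
    (Λm : ℝ)
    (hΛm : Λm = (SK ×ˢ SK).inf' (hSKne.product hSKne)
      (fun sr => (∫⁻ θ, min (πσ sr.1 θ) (πσ sr.2 θ) ∂μprK).toReal))
    (hΛpos : 0 < Λm) :
    ∀ f : (Fin K → Θ) → ℝ, MemLp f 2 μW → ∫ θ, f θ ∂μW = 0 →
      Λm / (2 - Λm) * (∫ θ, f θ ^ 2 ∂μW - (∫ θ, f θ ∂μW) ^ 2) ≤
        (SK.card : ℝ)⁻¹ * ∑ σ ∈ SK,
          (∫ θ, f θ ^ 2 ∂(μσ σ) - (∫ θ, f θ ∂(μσ σ)) ^ 2) :=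
  mixture_variance_lower_bound_general K μpr μprK hμprK πk hπkm hπkint SK hSKne πσ hπσ μσ hμσ πW hπW
    μW hμW Λm hΛm
end

section
/- Let Θ be a measurable space, K ≥ 1, let μ_pr be a probability measure on Θ and μ_pr^K its K-fold product. Let π_1,…,π_K : Θ → [0,∞) be measurable with ∫ π_k dμ_pr = 1, μ_1 the measure with density π_1 with respect to μ_pr, and π(θ) := ∏_{k=1}^K π_k(θ_k). Let S_K be a subgroup of the symmetric group on {1,…,K}; for σ ∈ S_K set π_σ(θ) := ∏_k π_{σ(k)}(θ_k), π_W := (1/|S_K|) Σ_{σ∈S_K} π_σ, and let μ_W be the probability measure on Θ^K with density π_W with respect to μ_pr^K. Define the importance weight ŵ(θ,σ) := π(θ_σ)/π_W(θ_σ) when π_W(θ_σ) > 0 and 0 otherwise. Then for every measurable Q : Θ → ℝ with Q integrable with respect to μ_1, ∫_Θ Q dμ_1 = (1/|S_K|) Σ_{σ∈S_K} ∫_{Θ^K} Q(θ_{σ(1)}) ŵ(θ,σ) μ_W(dθ). -/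
/-!
For each `σ ∈ S_K` the substitution `θ ↦ θ_σ` preserves `μ_pr^K` and, since `S_K` is a group,
also the symmetrized density `π_W`. As `ŵ(θ, σ) π_W(θ) = π(θ_σ)`, the `σ`-th summand is
`∫ Q(θ_{σ(1)}) π(θ_σ) dμ_pr^K = ∫ Q(θ_1) π(θ) dμ_pr^K`, which is `∫ Q dμ_1` by Fubini because the
factors `π_k`, `k ≠ 1`, integrate to one.
-/

open MeasureTheory ENNReal

theorem Finset.sum_comp_mul_right_of_closed {G M : Type*} [Group G] [AddCommMonoid M]
    {S : Finset G} (hinv : ∀ g ∈ S, g⁻¹ ∈ S) (hmul : ∀ g ∈ S, ∀ h ∈ S, g * h ∈ S)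
    {g : G} (hg : g ∈ S) (f : G → M) : ∑ h ∈ S, f (h * g) = ∑ h ∈ S, f h :=
  Finset.sum_nbij' (· * g) (· * g⁻¹) (fun h hh => hmul h hh g hg)
    (fun h hh => hmul h hh g⁻¹ (hinv g hg)) (by simp) (by simp) (fun _ _ => rfl)

theorem integral_comp_perm_pi {ι Θ E : Type*} [Fintype ι] [MeasurableSpace Θ]
    [NormedAddCommGroup E] [NormedSpace ℝ E]
    (μ : Measure Θ) [SigmaFinite μ] (σ : Equiv.Perm ι) (F : (ι → Θ) → E) :
    ∫ θ, F (fun i => θ (σ i)) ∂Measure.pi (fun _ => μ) = ∫ θ, F θ ∂Measure.pi (fun _ => μ) := by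
  rw [← (measurePreserving_piCongrLeft (fun _ : ι => μ) σ.symm).integral_comp' F]
  refine integral_congr_ae (ae_of_all _ fun θ => congrArg F (funext fun i => ?_))
  rw [MeasurableEquiv.coe_piCongrLeft,
    ← Equiv.piCongrLeft_apply_apply (fun _ : ι => Θ) σ.symm θ (σ i), Equiv.symm_apply_apply]

theorem integral_pi_apply_mul_prod {ι Θ : Type*} [Fintype ι] [DecidableEq ι] [MeasurableSpace Θ]
    (μ : Measure Θ) [SigmaFinite μ] (g : ι → Θ → ℝ) {j : ι} (hg : ∀ i ≠ j, ∫ x, g i x ∂μ = 1)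
    (Q : Θ → ℝ) :
    ∫ θ, Q (θ j) * ∏ i, g i (θ i) ∂Measure.pi (fun _ => μ) = ∫ x, Q x * g j x ∂μ := by
  calc ∫ θ, Q (θ j) * ∏ i, g i (θ i) ∂Measure.pi (fun _ => μ)
      = ∫ θ, ∏ i, (if i = j then Q (θ i) else 1) * g i (θ i) ∂Measure.pi (fun _ => μ) := by
        simp_rw [Finset.prod_mul_distrib, Finset.prod_ite_eq' Finset.univ j,
          if_pos (Finset.mem_univ j)]
    _ = ∏ i, ∫ x, (if i = j then Q x else 1) * g i x ∂μ :=
        integral_fintype_prod_eq_prod (fun i x => (if i = j then Q x else 1) * g i x)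
    _ = ∫ x, Q x * g j x ∂μ := by
        rw [Finset.prod_eq_single j (fun i _ hi => by simp only [if_neg hi, one_mul, hg i hi])
          (by simp)]
        simp only [if_true]

theorem integral_pi_apply_mul_toReal_prod {ι Θ : Type*} [Fintype ι] [DecidableEq ι]
    [MeasurableSpace Θ] (μ : Measure Θ) [SigmaFinite μ] (g : ι → Θ → ℝ≥0∞)
    (hgm : ∀ i, Measurable (g i)) (hg_lt_top : ∀ i, ∀ᵐ x ∂μ, g i x < ∞) {j : ι}
    (hg : ∀ i ≠ j, ∫⁻ x, g i x ∂μ = 1) (Q : Θ → ℝ) :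
    ∫ θ, Q (θ j) * (∏ i, g i (θ i)).toReal ∂Measure.pi (fun _ => μ) =
      ∫ x, Q x ∂μ.withDensity (g j) := by
  have hg_real : ∀ i ≠ j, ∫ x, (g i x).toReal ∂μ = 1 := fun i hi => by
    rw [integral_toReal (hgm i).aemeasurable (hg_lt_top i), hg i hi, toReal_one]
  simp_rw [toReal_prod]
  rw [integral_pi_apply_mul_prod μ _ hg_real,
    integral_withDensity_eq_integral_toReal_smul (hgm j) (hg_lt_top j)]
  simp_rw [smul_eq_mul, mul_comm]

section SymmetrizedDensity

variable {ι Θ : Type*} [Fintype ι]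

noncomputable def symmetrizedDensity (S : Finset (Equiv.Perm ι)) (g : ι → Θ → ℝ≥0∞)
    (θ : ι → Θ) : ℝ≥0∞ :=
  (S.card : ℝ≥0∞)⁻¹ * ∑ σ ∈ S, ∏ k, g (σ k) (θ k)

theorem measurable_symmetrizedDensity [MeasurableSpace Θ] (S : Finset (Equiv.Perm ι))
    {g : ι → Θ → ℝ≥0∞} (hg : ∀ i, Measurable (g i)) : Measurable (symmetrizedDensity S g) :=
  (Finset.measurable_sum _ fun σ _ => Finset.measurable_prod _ fun k _ =>
    (hg (σ k)).comp (measurable_pi_apply k)).const_mul _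

theorem symmetrizedDensity_ne_top (S : Finset (Equiv.Perm ι)) {g : ι → Θ → ℝ≥0∞}
    (hg : ∀ i x, g i x ≠ ∞) (θ : ι → Θ) : symmetrizedDensity S g θ ≠ ∞ := by
  rcases S.eq_empty_or_nonempty with rfl | hS
  · simp [symmetrizedDensity]
  · exact mul_ne_top (inv_ne_top.2 (Nat.cast_ne_zero.2 hS.card_ne_zero)) <|
      (sum_lt_top.2 fun σ _ => (prod_ne_top fun k _ => hg (σ k) (θ k)).lt_top).ne

theorem prod_eq_zero_of_symmetrizedDensity_eq_zero {S : Finset (Equiv.Perm ι)} (hS : 1 ∈ S)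
    (g : ι → Θ → ℝ≥0∞) {θ : ι → Θ} (h : symmetrizedDensity S g θ = 0) :
    ∏ k, g k (θ k) = 0 := by
  rw [symmetrizedDensity, mul_eq_zero, Finset.sum_eq_zero_iff] at h
  simpa using h.resolve_left (by simp) 1 hS

theorem symmetrizedDensity_comp_perm {S : Finset (Equiv.Perm ι)} (hinv : ∀ σ ∈ S, σ⁻¹ ∈ S)
    (hmul : ∀ σ ∈ S, ∀ ρ ∈ S, σ * ρ ∈ S) {σ : Equiv.Perm ι} (hσ : σ ∈ S)
    (g : ι → Θ → ℝ≥0∞) (θ : ι → Θ) :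
    symmetrizedDensity S g (fun i => θ (σ i)) = symmetrizedDensity S g θ := by
  have hreindex : ∀ ρ : Equiv.Perm ι,
      ∏ k, g (ρ k) (θ (σ k)) = ∏ k, g ((ρ * σ⁻¹) k) (θ k) := fun ρ => by
    rw [← Equiv.prod_comp σ fun k => g ((ρ * σ⁻¹) k) (θ k)]
    simp
  simp_rw [symmetrizedDensity, hreindex]
  rw [Finset.sum_comp_mul_right_of_closed hinv hmul (hinv σ hσ) fun ρ => ∏ k, g (ρ k) (θ k)]

end SymmetrizedDensity

theorem ENNReal.ite_pos_toReal_div_mul_toReal {a b : ℝ≥0∞} (hb : b ≠ ∞) (hab : b = 0 → a = 0) :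
    (if 0 < b then (a / b).toReal else 0) * b.toReal = a.toReal := by
  rcases eq_zero_or_pos b with rfl | hpos
  · simp [hab rfl]
  · rw [if_pos hpos, ← toReal_mul, ENNReal.div_mul_cancel hpos.ne' hb]

/-- the importance-sampling identity for Weighted Generalized
Parallel Tempering: for `Q` integrable w.r.t. `μ_1`,
`∫ Q dμ_1 = (1/|S_K|) ∑_{σ∈S_K} ∫ Q(θ_{σ(1)}) ŵ(θ,σ) μ_W(dθ)`. -/
theorem wgpt_importance_sampling_identity
    {Θ : Type*} [MeasurableSpace Θ] (K : ℕ) (hK : 0 < K)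
    (μpr : Measure Θ) [IsProbabilityMeasure μpr]
    (μprK : Measure (Fin K → Θ)) (hμprK : μprK = Measure.pi fun _ => μpr)
    (πk : Fin K → Θ → ℝ≥0∞) (hπkm : ∀ k, Measurable (πk k))
    (hπkfin : ∀ k x, πk k x ≠ ∞) (hπkint : ∀ k, ∫⁻ x, πk k x ∂μpr = 1)
    (μ1 : Measure Θ) (hμ1 : μ1 = μpr.withDensity (πk ⟨0, hK⟩))
    (π : (Fin K → Θ) → ℝ≥0∞) (hπ : ∀ θ, π θ = ∏ k, πk k (θ k))
    (SK : Finset (Equiv.Perm (Fin K)))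
    (hSKid : 1 ∈ SK)
    (hSKinv : ∀ σ ∈ SK, σ⁻¹ ∈ SK)
    (hSKmul : ∀ σ ∈ SK, ∀ ρ ∈ SK, σ * ρ ∈ SK)
    (πσ : Equiv.Perm (Fin K) → (Fin K → Θ) → ℝ≥0∞)
    (hπσ : ∀ σ θ, πσ σ θ = ∏ k, πk (σ k) (θ k))
    (πW : (Fin K → Θ) → ℝ≥0∞)
    (hπW : ∀ θ, πW θ = (SK.card : ℝ≥0∞)⁻¹ * ∑ σ ∈ SK, πσ σ θ)
    (μW : Measure (Fin K → Θ)) (hμW : μW = μprK.withDensity πW)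
    (wh : (Fin K → Θ) → Equiv.Perm (Fin K) → ℝ)
    (hwh : ∀ θ σ, wh θ σ =
      if 0 < πW (fun i => θ (σ i)) then
        (π (fun i => θ (σ i)) / πW (fun i => θ (σ i))).toReal
      else 0) :
    ∀ Q : Θ → ℝ, Integrable Q μ1 →
      ∫ x, Q x ∂μ1 =
        (SK.card : ℝ)⁻¹ * ∑ σ ∈ SK, ∫ θ, Q (θ (σ ⟨0, hK⟩)) * wh θ σ ∂μW := by
  intro Q _
  have hπW_eq : πW = symmetrizedDensity SK πk :=
    funext fun θ => by simp only [hπW, hπσ, symmetrizedDensity]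
  subst hπW_eq
  have hπWm : Measurable (symmetrizedDensity SK πk) := measurable_symmetrizedDensity SK hπkm
  have hπW_ne_top : ∀ θ, symmetrizedDensity SK πk θ ≠ ∞ := symmetrizedDensity_ne_top SK hπkfin
  have hπ_of_πW : ∀ θ, symmetrizedDensity SK πk θ = 0 → π θ = 0 := fun θ h0 => by
    rw [hπ, prod_eq_zero_of_symmetrizedDensity_eq_zero hSKid πk h0]
  have hterm : ∀ σ ∈ SK, ∫ θ, Q (θ (σ ⟨0, hK⟩)) * wh θ σ ∂μW = ∫ x, Q x ∂μ1 := fun σ hσ => by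
    calc ∫ θ, Q (θ (σ ⟨0, hK⟩)) * wh θ σ ∂μW
        = ∫ θ, Q (θ (σ ⟨0, hK⟩)) * (π fun i => θ (σ i)).toReal ∂μprK := by
          rw [hμW, integral_withDensity_eq_integral_toReal_smul hπWm
            (ae_of_all _ fun θ => (hπW_ne_top θ).lt_top)]
          refine integral_congr_ae (ae_of_all _ fun θ => ?_)
          dsimp only
          rw [smul_eq_mul, hwh, ← symmetrizedDensity_comp_perm hSKinv hSKmul hσ πk θ,
            ← ENNReal.ite_pos_toReal_div_mul_toReal (hπW_ne_top _) (hπ_of_πW _)]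
          ring
      _ = ∫ θ, Q (θ ⟨0, hK⟩) * (π θ).toReal ∂μprK := by
          rw [hμprK]
          exact integral_comp_perm_pi μpr σ fun θ => Q (θ ⟨0, hK⟩) * (π θ).toReal
      _ = ∫ x, Q x ∂μ1 := by
          simp_rw [hπ, hμprK, hμ1]
          exact integral_pi_apply_mul_toReal_prod μpr πk hπkm
            (fun k => ae_of_all _ fun x => (hπkfin k x).lt_top) (fun k _ => hπkint k) Q
  rw [Finset.sum_congr rfl hterm, Finset.sum_const, nsmul_eq_mul, ← mul_assoc,
    inv_mul_cancel₀ (Nat.cast_ne_zero.2 (Finset.card_ne_zero_of_mem hSKid)), one_mul]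
end
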